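/- The subgroup Σ of G ⋉ Σ (embedded as {1} × Σ) centralizes the normal subgroup Ξ = { (i(f), f⁻¹) : f ∈ F } of G ⋉ Σ. -/

import Mathlib

/-- A right action of `G` on `S` by group automorphisms, i.e. an
anti-homomorphism `G → Aut S`; we write `act φ g` for `φ^g`. -/
structure RightAutAction (S G : Type*) [Group S] [Group G] where
  act : S → G → S
  act_mul : ∀ φ ψ g, act (φ * ψ) g = act φ g * act ψ g
  act_one : ∀ φ, act φ 1 = φ
  act_act : ∀ φ g g', act (act φ g) g' = act φ (g * g')

theorem RightAutAction.act_one_left {S G : Type*} [Group S] [Group G]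
    (α : RightAutAction S G) (g : G) : α.act 1 g = 1 := by
  have h2 : α.act 1 g = α.act 1 g * α.act 1 g := by
    simpa using (α.act_mul 1 1 g).symm
  exact mul_left_cancel (h2.symm.trans (mul_one _).symm)

theorem RightAutAction.act_inv {S G : Type*} [Group S] [Group G]
    (α : RightAutAction S G) (φ : S) (g : G) :
    α.act φ⁻¹ g = (α.act φ g)⁻¹ := by
  have h := α.act_mul φ⁻¹ φ g
  rw [inv_mul_cancel, α.act_one_left] at h
  exact eq_inv_of_mul_eq_one_left h.symm

/-- The semidirect product `G ⋉ S` determined by the right action `α`,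
with multiplication `(g, φ)(g', φ') = (g g', φ^{g'} φ')`.  (A type synonym
for `G × S` carrying this group structure.) -/
def SD (S G : Type*) [Group S] [Group G] (_α : RightAutAction S G) : Type _ := G × S

/-- The element `(g, φ)` of `G ⋉ S`. -/
def SD.mk {S G : Type*} [Group S] [Group G] {α : RightAutAction S G}
    (g : G) (φ : S) : SD S G α := (g, φ)

instance SD.instGroup {S G : Type*} [Group S] [Group G] (α : RightAutAction S G) :
    Group (SD S G α) where
  mul x y := SD.mk (Prod.fst (x : G × S) * Prod.fst (y : G × S))
    (α.act (Prod.snd (x : G × S)) (Prod.fst (y : G × S)) * Prod.snd (y : G × S))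
  one := SD.mk 1 1
  inv x := SD.mk (Prod.fst (x : G × S))⁻¹
    (α.act (Prod.snd (x : G × S)) (Prod.fst (x : G × S))⁻¹)⁻¹
  mul_assoc := by
    rintro ⟨g1, s1⟩ ⟨g2, s2⟩ ⟨g3, s3⟩
    refine Prod.ext ?_ ?_
    · show (g1 * g2) * g3 = g1 * (g2 * g3)
      exact mul_assoc ..
    · show α.act (α.act s1 g2 * s2) g3 * s3 =
        α.act s1 (g2 * g3) * (α.act s2 g3 * s3)
      simp [α.act_mul, α.act_act, mul_assoc]
  one_mul := by
    rintro ⟨g, s⟩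
    show SD.mk _ _ = (⟨g, s⟩ : G × S)
    change ((1 : G) * g, α.act (1 : S) g * s) = (g, s)
    simp [SD.mk, RightAutAction.act_one_left]
  mul_one := by
    rintro ⟨g, s⟩
    show SD.mk _ _ = (⟨g, s⟩ : G × S)
    change (g * (1 : G), α.act s (1 : G) * (1 : S)) = (g, s)
    simp [SD.mk, α.act_one]
  inv_mul_cancel := by
    rintro ⟨g, s⟩
    show SD.mk _ _ = SD.mk 1 1
    simp [SD.mk, α.act_inv, α.act_act, α.act_one]
    rfl

namespace SD

variable {S G : Type*} [Group S] [Group G] {α : RightAutAction S G}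

theorem mk_mul_mk (g g' : G) (φ φ' : S) :
    (SD.mk g φ : SD S G α) * SD.mk g' φ' = SD.mk (g * g') (α.act φ g' * φ') :=
  rfl

theorem mk_inj {g g' : G} {φ φ' : S} :
    (SD.mk g φ : SD S G α) = SD.mk g' φ' ↔ g = g' ∧ φ = φ' :=
  Prod.ext_iff

theorem commute_mk_one_mk_iff (φ ψ : S) (g : G) :
    Commute (SD.mk 1 φ : SD S G α) (SD.mk g ψ) ↔ α.act φ g * ψ = ψ * φ := by
  rw [Commute, SemiconjBy, mk_mul_mk, mk_mul_mk, mk_inj, α.act_one, one_mul, mul_one]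
  exact and_iff_right rfl

end SD

theorem Sigma_centralizes_Xi_general
    (S G : Type*) [Group S] [Group G] (α : RightAutAction S G)
    (F : Subgroup S) (i : F →* G)
    (hA2 : ∀ (f : F) (φ : S), α.act φ (i f) = (f : S)⁻¹ * φ * (f : S)) :
    ∀ (φ : S) (p : SD S G α),
      (∃ f : F, p = SD.mk (i f) (f : S)⁻¹) →
      SD.mk 1 φ * p = p * SD.mk 1 φ := by
  rintro φ _ ⟨f, rfl⟩
  refine ((SD.commute_mk_one_mk_iff φ _ _).mpr ?_).eq
  rw [hA2]
  group

theorem Sigma_centralizes_Xi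
    (S G : Type*) [Group S] [Group G] (α : RightAutAction S G)
    (F : Subgroup S) (i : F →* G)
    (hA2 : ∀ (f : F) (φ : S), α.act φ (i f) = (f : S)⁻¹ * φ * (f : S))
    (hA3 : ∀ (f : F) (g : G), α.act (f : S) g ∈ F)
    (hA3' : ∀ (f : F) (g : G), i ⟨α.act (f : S) g, hA3 f g⟩ = g⁻¹ * i f * g) :
    ∀ (φ : S) (p : SD S G α),
      (∃ f : F, p = SD.mk (i f) (f : S)⁻¹) →
      SD.mk 1 φ * p = p * SD.mk 1 φ :=
  Sigma_centralizes_Xi_general S G α F i hA2
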